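/- If A ∈ B(H) and K is a conjugation on H with KA = A*K, then K√(I − A*A) = √(I − AA*)K and KA commutes with √(I − A*A), provided ‖A‖ ≤ 1. -/

import Mathlib

/-!
`K R K` is a positive operator whose square is `K (1 - A*A) K = 1 - A A*`, so by uniqueness of
positive square roots it is `Q`. The second identity then reduces to `A R = Q A`: `A` intertwines
`1 - A*A` with `1 - A A*`, hence every polynomial in them, and by Weierstrass approximation every
continuous function of them, in particular the square root.
-/

noncomputable section

open ContinuousLinearMap

def IsConjugation {H : Type*} [NormedAddCommGroup H] [InnerProductSpace ℂ H]
    (C : H → H) : Prop :=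
  (∀ x y, C (x + y) = C x + C y) ∧
  (∀ (a : ℂ) (x : H), C (a • x) = (starRingEnd ℂ) a • C x) ∧
  (∀ x, C (C x) = x) ∧
  (∀ x y : H, (inner ℂ (C x) (C y) : ℂ) = inner ℂ y x)

open Polynomial Filter Topology

theorem SemiconjBy.aeval {R A : Type*} [CommSemiring R] [Semiring A] [Algebra R A]
    {a b c : A} (h : SemiconjBy b a c) (p : R[X]) :
    SemiconjBy b (aeval a p) (aeval c p) := by
  induction p using Polynomial.induction_on' with
  | add p q hp hq => simpa only [map_add] using hp.add_right hq
  | monomial n r => simpa only [aeval_monomial, Algebra.smul_def] using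
      SemiconjBy.mul_right (Algebra.commute_algebraMap_left r b).symm (h.pow_right n)

theorem norm_cfc_sub_aeval_le {A : Type*} [CStarAlgebra A] {a : A} (ha : IsSelfAdjoint a)
    {f : ℝ → ℝ} (hf : ContinuousOn f (spectrum ℝ a)) {p : ℝ[X]} {s : Set ℝ}
    (hs : spectrum ℝ a ⊆ s) {ε : ℝ} (hε : 0 ≤ ε)
    (hp : ∀ x ∈ s, |p.eval x - f x| ≤ ε) : ‖cfc f a - aeval a p‖ ≤ ε := by
  rw [← cfc_polynomial p a, ← cfc_sub f _ a]
  exact norm_cfc_le hε fun x hx => by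
    simpa only [Real.norm_eq_abs, abs_sub_comm] using hp x (hs hx)

theorem SemiconjBy.cfc_real {A : Type*} [CStarAlgebra A] {a b c : A}
    (h : SemiconjBy b a c) (ha : IsSelfAdjoint a) (hc : IsSelfAdjoint c)
    {f : ℝ → ℝ} (hf : Continuous f) : SemiconjBy b (cfc f a) (cfc f c) := by
  -- `‖1‖` rather than `1`, since `A` may be the zero algebra
  set M := (‖a‖ + ‖c‖) * ‖(1 : A)‖
  have hspec : ∀ x : A, ‖x‖ ≤ ‖a‖ + ‖c‖ → spectrum ℝ x ⊆ Set.Icc (-M) M := fun x hx =>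
    (spectrum.subset_closedBall_norm_mul x).trans <| by
      rw [Real.closedBall_eq_Icc, zero_sub, zero_add]
      have hxM : ‖x‖ * ‖(1 : A)‖ ≤ M := mul_le_mul_of_nonneg_right hx (norm_nonneg _)
      exact Set.Icc_subset_Icc (neg_le_neg hxM) hxM
  have hsa := hspec a (le_add_of_nonneg_right (norm_nonneg c))
  have hsc := hspec c (le_add_of_nonneg_left (norm_nonneg a))
  have hnear : ∀ ε > 0, ‖b * cfc f a - cfc f c * b‖ ≤ 2 * ‖b‖ * ε := by
    intro ε hε
    obtain ⟨p, hp⟩ := exists_polynomial_near_of_continuousOn (-M) M f hf.continuousOn ε hε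
    have hpa := norm_cfc_sub_aeval_le ha hf.continuousOn hsa hε.le fun x hx => (hp x hx).le
    have hpc := norm_cfc_sub_aeval_le hc hf.continuousOn hsc hε.le fun x hx => (hp x hx).le
    calc ‖b * cfc f a - cfc f c * b‖
        = ‖b * (cfc f a - Polynomial.aeval a p) - (cfc f c - Polynomial.aeval c p) * b‖ := by
          rw [mul_sub, sub_mul, (h.aeval p).eq, sub_sub_sub_cancel_right]
      _ ≤ ‖b‖ * ε + ε * ‖b‖ :=
          norm_sub_le_of_le (norm_mul_le_of_le le_rfl hpa) (norm_mul_le_of_le hpc le_rfl)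
      _ = 2 * ‖b‖ * ε := by ring
  have hlim : Tendsto (fun ε => 2 * ‖b‖ * ε) (𝓝[>] 0) (𝓝 0) := by
    simpa using ((continuous_const_mul (2 * ‖b‖)).tendsto 0).mono_left nhdsWithin_le_nhds
  have hzero := ge_of_tendsto hlim (eventually_nhdsWithin_of_forall hnear)
  exact sub_eq_zero.mp (norm_le_zero_iff.mp hzero)

theorem SemiconjBy.cfcSqrt {A : Type*} [CStarAlgebra A] [PartialOrder A] [StarOrderedRing A]
    {a b c : A} (h : SemiconjBy b a c) (ha : 0 ≤ a) (hc : 0 ≤ c) :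
    SemiconjBy b (CFC.sqrt a) (CFC.sqrt c) := by
  rw [CFC.sqrt_eq_real_sqrt a, CFC.sqrt_eq_real_sqrt c, cfcₙ_eq_cfc, cfcₙ_eq_cfc]
  exact h.cfc_real ha.isSelfAdjoint hc.isSelfAdjoint Real.continuous_sqrt

namespace IsConjugation

variable {H : Type*} [NormedAddCommGroup H] [InnerProductSpace ℂ H] {K : H → H}

theorem involutive (hK : IsConjugation K) : Function.Involutive K := hK.2.2.1

theorem inner_map_map (hK : IsConjugation K) (x y : H) :
    (inner ℂ (K x) (K y) : ℂ) = inner ℂ y x := hK.2.2.2 x y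

theorem norm_map (hK : IsConjugation K) (x : H) : ‖K x‖ = ‖x‖ := by
  have h := hK.inner_map_map x x
  rw [inner_self_eq_norm_sq_to_K, inner_self_eq_norm_sq_to_K] at h
  exact_mod_cast (sq_eq_sq₀ (norm_nonneg _) (norm_nonneg _)).mp (by exact_mod_cast h)

def toLinearIsometryEquiv (hK : IsConjugation K) : H ≃ₗᵢ⋆[ℂ] H where
  toFun := K
  invFun := K
  map_add' := hK.1
  map_smul' := hK.2.1
  left_inv := hK.involutive
  right_inv := hK.involutive
  norm_map' := hK.norm_map

variable [CompleteSpace H]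

def conjugate (hK : IsConjugation K) : (H →L[ℂ] H) →⋆ₙ+* (H →L[ℂ] H) where
  toFun T := (hK.toLinearIsometryEquiv : H →L⋆[ℂ] H).comp
    (T.comp (hK.toLinearIsometryEquiv : H →L⋆[ℂ] H))
  map_mul' S T := by ext x; exact congrArg (K ∘ S) (hK.involutive _).symm
  map_zero' := by ext x; exact map_zero hK.toLinearIsometryEquiv
  map_add' S T := by ext x; exact hK.1 _ _
  map_star' T := by
    refine (eq_adjoint_iff _ _).mpr fun x y => ?_
    change inner ℂ (K (adjoint T (K x))) y = inner ℂ x (K (T (K y)))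
    rw [← hK.involutive y, hK.inner_map_map, adjoint_inner_right, ← hK.inner_map_map,
      hK.involutive, hK.involutive]

theorem conjugate_apply (hK : IsConjugation K) (T : H →L[ℂ] H) (x : H) :
    hK.conjugate T x = K (T (K x)) := rfl

theorem conjugate_one (hK : IsConjugation K) : hK.conjugate 1 = 1 := by
  ext x; exact hK.involutive x

theorem conjugate_eq_iff (hK : IsConjugation K) {S T : H →L[ℂ] H} :
    hK.conjugate T = S ↔ ∀ x, K (T x) = S (K x) := by
  refine ⟨fun h x => ?_, fun h => ext fun x => ?_⟩
  · rw [← h, conjugate_apply, hK.involutive]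
  · rw [conjugate_apply, h, hK.involutive]

theorem conjugate_conjugate (hK : IsConjugation K) (T : H →L[ℂ] H) :
    hK.conjugate (hK.conjugate T) = T :=
  ext fun x => by simp only [conjugate_apply, hK.involutive x, hK.involutive (T x)]

end IsConjugation

theorem conjugation_sqrt_commutation_general
    {H : Type*} [NormedAddCommGroup H] [InnerProductSpace ℂ H] [CompleteSpace H]
    (A : H →L[ℂ] H)
    (K : H → H) (hK : IsConjugation K)
    (hKA : ∀ x, K (A x) = adjoint A (K x))
    (R : H →L[ℂ] H) (hR : R.IsPositive) (hR2 : R ∘L R = 1 - adjoint A ∘L A)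
    (Q : H →L[ℂ] H) (hQ : Q.IsPositive) (hQ2 : Q ∘L Q = 1 - A ∘L adjoint A) :
    (∀ x, K (R x) = Q (K x)) ∧ (∀ x, K (A (R x)) = R (K (A x))) := by
  rw [← nonneg_iff_isPositive] at hR hQ
  replace hR2 : R * R = 1 - star A * A := hR2
  replace hQ2 : Q * Q = 1 - A * star A := hQ2
  have hconjA : hK.conjugate A = star A := hK.conjugate_eq_iff.mpr hKA
  have hconjR : hK.conjugate R = Q := by
    refine (CFC.mul_self_eq_mul_self_iff _ _ (map_nonneg hK.conjugate hR) hQ).mp ?_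
    rw [← map_mul, hR2, map_sub, hK.conjugate_one, map_mul, map_star, hconjA, star_star, hQ2]
  have hAR : A * R = Q * A := by
    rw [← CFC.sqrt_unique hR2 hR, ← CFC.sqrt_unique hQ2 hQ]
    refine SemiconjBy.cfcSqrt ?_ ?_ ?_
    · simp only [SemiconjBy, mul_sub, sub_mul, mul_one, one_mul, mul_assoc]
    · exact hR2 ▸ hR.isSelfAdjoint.mul_self_nonneg
    · exact hQ2 ▸ hQ.isSelfAdjoint.mul_self_nonneg
  have hconjQ : hK.conjugate Q = R := hconjR ▸ hK.conjugate_conjugate R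
  refine ⟨hK.conjugate_eq_iff.mp hconjR, fun x => ?_⟩
  exact (congrArg K (DFunLike.congr_fun hAR x)).trans (hK.conjugate_eq_iff.mp hconjQ (A x))

/-- If `K` is a conjugation with `KA = A*K` and `‖A‖ ≤ 1`, then
`K√(I − A*A) = √(I − AA*)K` and `KA` commutes with `√(I − A*A)`; here the
positive square roots `√(I − A*A)` and `√(I − AA*)` are described as the
positive operators `R`, `Q` with `R² = I − A*A`, `Q² = I − AA*`. -/
theorem conjugation_sqrt_commutation
    {H : Type*} [NormedAddCommGroup H] [InnerProductSpace ℂ H] [CompleteSpace H]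
    (A : H →L[ℂ] H) (hA : ‖A‖ ≤ 1)
    (K : H → H) (hK : IsConjugation K)
    (hKA : ∀ x, K (A x) = adjoint A (K x))
    (R : H →L[ℂ] H) (hR : R.IsPositive) (hR2 : R ∘L R = 1 - adjoint A ∘L A)
    (Q : H →L[ℂ] H) (hQ : Q.IsPositive) (hQ2 : Q ∘L Q = 1 - A ∘L adjoint A) :
    (∀ x, K (R x) = Q (K x)) ∧ (∀ x, K (A (R x)) = R (K (A x))) :=
  conjugation_sqrt_commutation_general A K hK hKA R hR hR2 Q hQ hQ2
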